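/- Let 2 ≤ p ≤ ∞ and let a_1, …, a_N be n×n complex matrices. Then (Σ_{k=1}^N ‖a_k‖_p^p)^{1/p} ≤ ‖(Σ_{k=1}^N a_k* a_k)^{1/2}‖_p, where ‖·‖_p denotes the Schatten p-norm (with the convention of operator norm for p = ∞). -/

import Mathlib

open scoped ENNReal
open Matrix
open scoped ENNReal
open scoped ComplexOrder

/-- The Schatten `p`-norm of a complex matrix (`p = ∞` gives the operator norm,
i.e. the largest singular value). -/
noncomputable def schatten {d : ℕ} (p : ℝ≥0∞) (a : Matrix (Fin d) (Fin d) ℂ) : ℝ :=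
  if p = ⊤ then ⨆ i, Real.sqrt ((Matrix.posSemidef_conjTranspose_mul_self a).1.eigenvalues i)
  else (∑ i, (Matrix.posSemidef_conjTranspose_mul_self a).1.eigenvalues i ^ (p.toReal / 2)) ^
    (1 / p.toReal)

/-- The positive semidefinite square root of a positive semidefinite matrix (as in the
older Mathlib, where it was `Matrix.PosSemidef.sqrt`). -/
noncomputable def Matrix.PosSemidef.sqrt {n 𝕜 : Type*} [Fintype n] [DecidableEq n] [RCLike 𝕜]
    {A : Matrix n n 𝕜} (hA : A.PosSemidef) : Matrix n n 𝕜 :=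
  hA.1.eigenvectorUnitary.1 * diagonal ((↑) ∘ (fun x => Real.sqrt x) ∘ hA.1.eigenvalues) *
    (star hA.1.eigenvectorUnitary : Matrix n n 𝕜)

lemma psdSum {d N : ℕ} (a : Fin N → Matrix (Fin d) (Fin d) ℂ) :
    (∑ k, (a k)ᴴ * a k).PosSemidef :=
  Finset.sum_induction (fun k => (a k)ᴴ * a k) Matrix.PosSemidef
    (fun _ _ ha hb => ha.add hb) Matrix.PosSemidef.zero
    (fun k _ => Matrix.posSemidef_conjTranspose_mul_self (a k))

namespace StmtAux

variable {d N : ℕ} (a : Fin N → Matrix (Fin d) (Fin d) ℂ)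

/-- eigenvalues of `aₖᴴ aₖ` -/
noncomputable def μ (k : Fin N) (j : Fin d) : ℝ :=
  (Matrix.posSemidef_conjTranspose_mul_self (a k)).1.eigenvalues j

/-- eigenvectors of `aₖᴴ aₖ` -/
noncomputable def u (k : Fin N) (j : Fin d) : Fin d → ℂ :=
  ⇑((Matrix.posSemidef_conjTranspose_mul_self (a k)).1.eigenvectorBasis j)

/-- eigenvalues of `S = ∑ aₖᴴ aₖ` -/
noncomputable def ν (i : Fin d) : ℝ := (psdSum a).1.eigenvalues i

/-- eigenvectors of `S` -/
noncomputable def w (i : Fin d) : Fin d → ℂ := ⇑((psdSum a).1.eigenvectorBasis i)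

lemma mu_nonneg (k : Fin N) (j : Fin d) : 0 ≤ μ a k j :=
  (Matrix.posSemidef_conjTranspose_mul_self (a k)).eigenvalues_nonneg j

lemma nu_nonneg (i : Fin d) : 0 ≤ ν a i := (psdSum a).eigenvalues_nonneg i

lemma A_mulVec_u (k : Fin N) (j : Fin d) :
    ((a k)ᴴ * a k) *ᵥ u a k j = (μ a k j) • u a k j :=
  (Matrix.posSemidef_conjTranspose_mul_self (a k)).1.mulVec_eigenvectorBasis j

lemma S_mulVec_w (i : Fin d) :
    (∑ k, (a k)ᴴ * a k) *ᵥ w a i = (ν a i) • w a i :=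
  (psdSum a).1.mulVec_eigenvectorBasis i

lemma dot_aux (M : Matrix (Fin d) (Fin d) ℂ) (x y : Fin d → ℂ) :
    star (M *ᵥ x) ⬝ᵥ (M *ᵥ y) = star x ⬝ᵥ ((Mᴴ * M) *ᵥ y) := by
  rw [star_mulVec, Matrix.dotProduct_mulVec, Matrix.vecMul_vecMul,
    ← Matrix.dotProduct_mulVec]

lemma sum_mulVec {n : ℕ} (M : Fin n → Matrix (Fin d) (Fin d) ℂ) (x : Fin d → ℂ) :
    (∑ k, M k) *ᵥ x = ∑ k, M k *ᵥ x := by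
  ext i
  simp only [Matrix.mulVec, dotProduct, Finset.sum_apply, Finset.sum_mul,
    Finset.sum_apply', Matrix.sum_apply]
  rw [Finset.sum_comm]

lemma u_dot (k : Fin N) (j j' : Fin d) :
    star (u a k j) ⬝ᵥ u a k j' = if j = j' then 1 else 0 := by
  have := orthonormal_iff_ite.mp
    (Matrix.posSemidef_conjTranspose_mul_self (a k)).1.eigenvectorBasis.orthonormal j j'
  rw [EuclideanSpace.inner_eq_star_dotProduct, dotProduct_comm] at this
  exact this

lemma w_dot (i i' : Fin d) :
    star (w a i) ⬝ᵥ w a i' = if i = i' then 1 else 0 := by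
  have := orthonormal_iff_ite.mp (psdSum a).1.eigenvectorBasis.orthonormal i i'
  rw [EuclideanSpace.inner_eq_star_dotProduct, dotProduct_comm] at this
  exact this

lemma parseval (x : EuclideanSpace ℂ (Fin d)) :
    ∑ i, ‖star (w a i) ⬝ᵥ ⇑x‖ ^ 2 = ‖x‖ ^ 2 := by
  have h1 : ‖((psdSum a).1.eigenvectorBasis.repr x)‖ = ‖x‖ :=
    LinearIsometryEquiv.norm_map _ x
  have h2 : ∀ i, (psdSum a).1.eigenvectorBasis.repr x i = star (w a i) ⬝ᵥ ⇑x := by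
    intro i
    rw [OrthonormalBasis.repr_apply_apply, EuclideanSpace.inner_eq_star_dotProduct]
    exact dotProduct_comm _ _
  rw [← h1, EuclideanSpace.norm_eq, Real.sq_sqrt (by positivity)]
  exact Finset.sum_congr rfl fun i _ => by rw [h2]

lemma dotProduct_sum' {n : ℕ} (v : Fin d → ℂ) (f : Fin n → Fin d → ℂ) :
    v ⬝ᵥ (∑ k, f k) = ∑ k, v ⬝ᵥ f k := by
  simp only [dotProduct, Finset.sum_apply, Finset.mul_sum]
  rw [Finset.sum_comm]

/-- `L0`: if `ν i = 0` then `aₖ *ᵥ wᵢ = 0`. -/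
lemma L0 {i : Fin d} (h : ν a i = 0) (k : Fin N) : a k *ᵥ w a i = 0 := by
  have h0 : star (w a i) ⬝ᵥ ((∑ l, (a l)ᴴ * a l) *ᵥ w a i) = 0 := by
    rw [S_mulVec_w, h]
    simp
  rw [sum_mulVec, dotProduct_sum'] at h0
  have h1 : ∀ l : Fin N, star (w a i) ⬝ᵥ (((a l)ᴴ * a l) *ᵥ w a i)
      = star (a l *ᵥ w a i) ⬝ᵥ (a l *ᵥ w a i) := fun l => (dot_aux _ _ _).symm
  simp only [h1] at h0
  have h2 := (Finset.sum_eq_zero_iff_of_nonneg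
    (fun l _ => dotProduct_star_self_nonneg (a l *ᵥ w a i))).mp h0 k (Finset.mem_univ k)
  exact dotProduct_star_self_eq_zero.mp h2

/-- big-space vector attached to the `j`-th eigenvector of `aₖᴴ aₖ` -/
noncomputable def Vv (p : Fin N × Fin d) : Fin N × Fin d → ℂ :=
  ((Real.sqrt (μ a p.1 p.2))⁻¹ : ℝ) •
    fun q => if q.1 = p.1 then (a p.1 *ᵥ u a p.1 p.2) q.2 else 0

/-- big-space vector attached to `i`-th eigenvector of `S` -/
noncomputable def Gg (i : Fin d) : Fin N × Fin d → ℂ :=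
  ((Real.sqrt (ν a i))⁻¹ : ℝ) • fun q => (a q.1 *ᵥ w a i) q.2

noncomputable def cc (p : Fin N × Fin d) (i : Fin d) : ℝ := ‖star (Gg a i) ⬝ᵥ Vv a p‖ ^ 2

lemma cc_nonneg (p : Fin N × Fin d) (i : Fin d) : 0 ≤ cc a p i := by unfold cc; positivity

lemma Vv_zero {p : Fin N × Fin d} (h : μ a p.1 p.2 = 0) : Vv a p = 0 := by
  unfold Vv
  rw [h, Real.sqrt_zero, _root_.inv_zero, zero_smul]

lemma Gg_zero {i : Fin d} (h : ν a i = 0) : Gg a i = 0 := by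
  unfold Gg
  rw [h, Real.sqrt_zero, _root_.inv_zero, zero_smul]

lemma dot_full_embed (f : Fin N → Fin d → ℂ) (k : Fin N) (y : Fin d → ℂ) :
    (star fun q : Fin N × Fin d => f q.1 q.2) ⬝ᵥ
      (fun q : Fin N × Fin d => if q.1 = k then y q.2 else 0) = star (f k) ⬝ᵥ y := by
  simp only [dotProduct, Fintype.sum_prod_type, Pi.star_apply, mul_ite, mul_zero]
  rw [Finset.sum_comm]
  simp [Finset.sum_ite_eq']

lemma dot_embed_embed (k k' : Fin N) (x y : Fin d → ℂ) :
    (star fun q : Fin N × Fin d => if q.1 = k then x q.2 else 0) ⬝ᵥ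
      (fun q : Fin N × Fin d => if q.1 = k' then y q.2 else 0)
      = if k' = k then star x ⬝ᵥ y else 0 := by
  rw [dot_full_embed (fun l t => if l = k then x t else 0) k' y]
  by_cases h : k' = k <;>
    simp [h, zero_dotProduct, show (star fun _ : Fin d => (0:ℂ)) = fun _ => (0:ℂ) by
      funext t; simp]

lemma dot_smul_smul (c c' : ℝ) (F G : Fin N × Fin d → ℂ) :
    star (c • F) ⬝ᵥ (c' • G) = ((c * c' : ℝ) : ℂ) * (star F ⬝ᵥ G) := by
  rw [star_smul, smul_dotProduct, dotProduct_smul]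
  push_cast
  simp [star_trivial, smul_smul]
  ring

lemma dot_full_full (f g : Fin N → Fin d → ℂ) :
    (star fun q : Fin N × Fin d => f q.1 q.2) ⬝ᵥ (fun q : Fin N × Fin d => g q.1 q.2)
      = ∑ k, star (f k) ⬝ᵥ g k := by
  simp [dotProduct, Fintype.sum_prod_type]

lemma inv_sqrt_sq {x : ℝ} (hx : 0 ≤ x) (h0 : x ≠ 0) :
    (Real.sqrt x)⁻¹ * (Real.sqrt x)⁻¹ * x = 1 := by
  have h1 : Real.sqrt x * Real.sqrt x = x := Real.mul_self_sqrt hx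
  have h2 : Real.sqrt x ≠ 0 := by
    intro h
    rw [h, mul_zero] at h1
    exact h0 h1.symm
  rw [← h1]
  field_simp
  rw [Real.sqrt_sq (Real.sqrt_nonneg x)]

lemma VV_inner (p q : Fin N × Fin d) :
    star (Vv a p) ⬝ᵥ Vv a q =
      (((Real.sqrt (μ a p.1 p.2))⁻¹ * (Real.sqrt (μ a q.1 q.2))⁻¹ : ℝ) : ℂ) *
        (if q.1 = p.1 ∧ p.2 = q.2 then ((μ a q.1 q.2 : ℝ) : ℂ) else 0) := by
  unfold Vv
  rw [dot_smul_smul, dot_embed_embed]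
  by_cases h : q.1 = p.1
  · rw [if_pos h, h, dot_aux, A_mulVec_u, dotProduct_smul, u_dot]
    by_cases h2 : p.2 = q.2
    · rw [if_pos h2, if_pos (And.intro rfl h2)]
      simp [Complex.real_smul]
    · rw [if_neg h2, if_neg (fun hc => h2 hc.2)]
      simp
  · rw [if_neg h, if_neg (fun hc => h hc.1)]

lemma GG_inner (i i' : Fin d) :
    star (Gg a i) ⬝ᵥ Gg a i' =
      (((Real.sqrt (ν a i))⁻¹ * (Real.sqrt (ν a i'))⁻¹ : ℝ) : ℂ) *
        (if i = i' then ((ν a i' : ℝ) : ℂ) else 0) := by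
  unfold Gg
  rw [dot_smul_smul, dot_full_full (fun k => a k *ᵥ w a i) (fun k => a k *ᵥ w a i')]
  congr 1
  have h1 : ∀ k : Fin N, star (a k *ᵥ w a i) ⬝ᵥ (a k *ᵥ w a i')
      = star (w a i) ⬝ᵥ (((a k)ᴴ * a k) *ᵥ w a i') := fun k => dot_aux _ _ _
  simp only [h1]
  rw [← dotProduct_sum', ← sum_mulVec, S_mulVec_w, dotProduct_smul, w_dot]
  by_cases h2 : i = i'
  · rw [if_pos h2, if_pos h2]
    simp [Complex.real_smul]
  · rw [if_neg h2, if_neg h2]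
    simp

lemma GV_inner (i : Fin d) (p : Fin N × Fin d) :
    star (Gg a i) ⬝ᵥ Vv a p =
      (((Real.sqrt (ν a i))⁻¹ * (Real.sqrt (μ a p.1 p.2))⁻¹ : ℝ) : ℂ) *
        (star (a p.1 *ᵥ w a i) ⬝ᵥ (a p.1 *ᵥ u a p.1 p.2)) := by
  unfold Gg Vv
  rw [dot_smul_smul, dot_full_embed (fun k => a k *ᵥ w a i) p.1 (a p.1 *ᵥ u a p.1 p.2)]

/-- Euclidean-space version of `Vv`. -/
noncomputable def Ve (p : Fin N × Fin d) : EuclideanSpace ℂ (Fin N × Fin d) :=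
  (WithLp.equiv 2 _).symm (Vv a p)

/-- Euclidean-space version of `Gg`. -/
noncomputable def Ge (i : Fin d) : EuclideanSpace ℂ (Fin N × Fin d) :=
  (WithLp.equiv 2 _).symm (Gg a i)

lemma Ve_inner (p q : Fin N × Fin d) :
    (inner ℂ (Ve a p) (Ve a q) : ℂ) = star (Vv a p) ⬝ᵥ Vv a q :=
  (EuclideanSpace.inner_toLp_toLp _ _).trans (dotProduct_comm _ _)

lemma Ge_inner (i i' : Fin d) :
    (inner ℂ (Ge a i) (Ge a i') : ℂ) = star (Gg a i) ⬝ᵥ Gg a i' :=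
  (EuclideanSpace.inner_toLp_toLp _ _).trans (dotProduct_comm _ _)

lemma GeVe_inner (i : Fin d) (p : Fin N × Fin d) :
    (inner ℂ (Ge a i) (Ve a p) : ℂ) = star (Gg a i) ⬝ᵥ Vv a p :=
  (EuclideanSpace.inner_toLp_toLp _ _).trans (dotProduct_comm _ _)

lemma norm_Ve {p : Fin N × Fin d} (h : μ a p.1 p.2 ≠ 0) : ‖Ve a p‖ ^ 2 = 1 := by
  have h1 : (inner ℂ (Ve a p) (Ve a p) : ℂ) = ((‖Ve a p‖ : ℝ) : ℂ) ^ 2 :=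
    inner_self_eq_norm_sq_to_K _
  rw [Ve_inner, VV_inner, if_pos (And.intro rfl rfl)] at h1
  have h2 : ((((Real.sqrt (μ a p.1 p.2))⁻¹ * (Real.sqrt (μ a p.1 p.2))⁻¹ : ℝ) : ℂ) *
      ((μ a p.1 p.2 : ℝ) : ℂ)) = 1 := by
    rw [← Complex.ofReal_mul, ← Complex.ofReal_one]
    exact congrArg _ (inv_sqrt_sq (mu_nonneg a p.1 p.2) h)
  rw [h2] at h1
  exact_mod_cast h1.symm

lemma norm_Ge {i : Fin d} (h : ν a i ≠ 0) : ‖Ge a i‖ ^ 2 = 1 := by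
  have h1 : (inner ℂ (Ge a i) (Ge a i) : ℂ) = ((‖Ge a i‖ : ℝ) : ℂ) ^ 2 :=
    inner_self_eq_norm_sq_to_K _
  rw [Ge_inner, GG_inner, if_pos rfl] at h1
  have h2 : ((((Real.sqrt (ν a i))⁻¹ * (Real.sqrt (ν a i))⁻¹ : ℝ) : ℂ) *
      ((ν a i : ℝ) : ℂ)) = 1 := by
    rw [← Complex.ofReal_mul, ← Complex.ofReal_one]
    exact congrArg _ (inv_sqrt_sq (nu_nonneg a i) h)
  rw [h2] at h1
  exact_mod_cast h1.symm

lemma orthonormal_V :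
    Orthonormal ℂ (fun p : {p : Fin N × Fin d // μ a p.1 p.2 ≠ 0} => Ve a p.1) := by
  rw [orthonormal_iff_ite]
  rintro ⟨p, hp⟩ ⟨q, hq⟩
  rw [Ve_inner, VV_inner]
  by_cases h : p = q
  · subst h
    rw [if_pos (And.intro rfl rfl), if_pos (Subtype.ext rfl)]
    rw [← Complex.ofReal_mul, ← Complex.ofReal_one]
    exact congrArg _ (inv_sqrt_sq (mu_nonneg a p.1 p.2) hp)
  · rw [if_neg (fun hc => h (Prod.ext hc.1.symm hc.2)),
      if_neg (fun hc => h (Subtype.mk_eq_mk.mp hc)), mul_zero]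

lemma orthonormal_G :
    Orthonormal ℂ (fun i : {i : Fin d // ν a i ≠ 0} => Ge a i.1) := by
  rw [orthonormal_iff_ite]
  rintro ⟨i, hi⟩ ⟨i', hi'⟩
  rw [Ge_inner, GG_inner]
  by_cases h : i = i'
  · subst h
    rw [if_pos rfl, if_pos (Subtype.ext rfl)]
    rw [← Complex.ofReal_mul, ← Complex.ofReal_one]
    exact congrArg _ (inv_sqrt_sq (nu_nonneg a i) hi)
  · rw [if_neg h, if_neg (fun hc => h (Subtype.mk_eq_mk.mp hc)), mul_zero]

lemma cc_zero_left {i : Fin d} (h : ν a i = 0) (p : Fin N × Fin d) : cc a p i = 0 := by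
  unfold cc
  rw [Gg_zero a h, star_zero, zero_dotProduct]
  simp

lemma cc_zero_right {p : Fin N × Fin d} (h : μ a p.1 p.2 = 0) (i : Fin d) : cc a p i = 0 := by
  unfold cc
  rw [Vv_zero a h, dotProduct_zero]
  simp

lemma cc_eq_inner (p : Fin N × Fin d) (i : Fin d) :
    cc a p i = ‖(inner ℂ (Ge a i) (Ve a p) : ℂ)‖ ^ 2 := by
  rw [GeVe_inner]
  rfl

lemma factC (p : Fin N × Fin d) : ∑ i, cc a p i ≤ 1 := by
  by_cases hμ : μ a p.1 p.2 = 0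
  · simp [cc_zero_right a hμ]
  · have bessel := (orthonormal_G a).sum_inner_products_le (Ve a p) (s := Finset.univ)
    have e0 : ∑ i, cc a p i = ∑ i ∈ Finset.univ.filter (fun i => ν a i ≠ 0), cc a p i := by
      refine (Finset.sum_filter_of_ne ?_).symm
      intro i _ hne
      by_contra h0
      exact hne (cc_zero_left a h0 p)
    have e1 : ∑ i ∈ Finset.univ.filter (fun i => ν a i ≠ 0), cc a p i
        = ∑ i : {i : Fin d // ν a i ≠ 0}, cc a p i.1 :=
      Finset.sum_subtype _ (by simp) _
    rw [e0, e1]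
    calc ∑ i : {i : Fin d // ν a i ≠ 0}, cc a p i.1
        = ∑ i : {i : Fin d // ν a i ≠ 0}, ‖(inner ℂ (Ge a i.1) (Ve a p) : ℂ)‖ ^ 2 := by
          simp only [cc_eq_inner]
      _ ≤ ‖Ve a p‖ ^ 2 := bessel
      _ = 1 := norm_Ve a hμ

lemma factB (i : Fin d) : ∑ p, cc a p i ≤ 1 := by
  by_cases hν : ν a i = 0
  · simp [cc_zero_left a hν]
  · have bessel := (orthonormal_V a).sum_inner_products_le (Ge a i) (s := Finset.univ)
    have e0 : ∑ p, cc a p i = ∑ p ∈ Finset.univ.filter (fun p : Fin N × Fin d =>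
        μ a p.1 p.2 ≠ 0), cc a p i := by
      refine (Finset.sum_filter_of_ne ?_).symm
      intro p _ hne
      by_contra h0
      exact hne (cc_zero_right a h0 i)
    have e1 : ∑ p ∈ Finset.univ.filter (fun p : Fin N × Fin d => μ a p.1 p.2 ≠ 0), cc a p i
        = ∑ p : {p : Fin N × Fin d // μ a p.1 p.2 ≠ 0}, cc a p.1 i :=
      Finset.sum_subtype _ (by simp) _
    rw [e0, e1]
    calc ∑ p : {p : Fin N × Fin d // μ a p.1 p.2 ≠ 0}, cc a p.1 i
        = ∑ p : {p : Fin N × Fin d // μ a p.1 p.2 ≠ 0}, ‖(inner ℂ (Ve a p.1) (Ge a i) : ℂ)‖ ^ 2 := by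
          refine Finset.sum_congr rfl fun p _ => ?_
          rw [cc_eq_inner, ← norm_inner_symm]
      _ ≤ ‖Ge a i‖ ^ 2 := bessel
      _ = 1 := norm_Ge a hν

lemma factA (p : Fin N × Fin d) : μ a p.1 p.2 = ∑ i, cc a p i * ν a i := by
  by_cases hμ : μ a p.1 p.2 = 0
  · simp [cc_zero_right a hμ, hμ]
  · have step : ∀ i, cc a p i * ν a i = (μ a p.1 p.2)⁻¹ *
        ‖star (a p.1 *ᵥ w a i) ⬝ᵥ (a p.1 *ᵥ u a p.1 p.2)‖ ^ 2 := by
      intro i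
      by_cases hν : ν a i = 0
      · rw [hν, mul_zero, L0 a hν p.1]
        simp
      · have hcc : cc a p i = (ν a i)⁻¹ * (μ a p.1 p.2)⁻¹ *
            ‖star (a p.1 *ᵥ w a i) ⬝ᵥ (a p.1 *ᵥ u a p.1 p.2)‖ ^ 2 := by
          unfold cc
          rw [GV_inner, norm_mul, mul_pow, Complex.norm_real]
          congr 1
          rw [Real.norm_eq_abs, abs_of_nonneg (by positivity), mul_pow,
            ← Real.sqrt_inv, ← Real.sqrt_inv,
            Real.sq_sqrt (inv_nonneg.mpr (nu_nonneg a i)),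
            Real.sq_sqrt (inv_nonneg.mpr (mu_nonneg a p.1 p.2))]
        rw [hcc]
        field_simp
    rw [Finset.sum_congr rfl fun i _ => step i]
    have step2 : ∀ i, ‖star (a p.1 *ᵥ w a i) ⬝ᵥ (a p.1 *ᵥ u a p.1 p.2)‖ ^ 2
        = μ a p.1 p.2 ^ 2 * ‖star (w a i) ⬝ᵥ u a p.1 p.2‖ ^ 2 := by
      intro i
      rw [dot_aux, A_mulVec_u, dotProduct_smul, norm_smul]
      rw [Real.norm_eq_abs, abs_of_nonneg (mu_nonneg a p.1 p.2), mul_pow]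
    rw [Finset.sum_congr rfl fun i _ => by rw [step2 i]]
    have hpars : ∑ i, ‖star (w a i) ⬝ᵥ u a p.1 p.2‖ ^ 2 = 1 := by
      have hp1 := parseval a
        (((Matrix.posSemidef_conjTranspose_mul_self (a p.1)).1).eigenvectorBasis p.2)
      have hp2 : ‖((Matrix.posSemidef_conjTranspose_mul_self (a p.1)).1).eigenvectorBasis p.2‖
          = 1 :=
        ((Matrix.posSemidef_conjTranspose_mul_self (a p.1)).1).eigenvectorBasis.orthonormal.1 p.2
      rw [hp2, one_pow] at hp1
      exact hp1
    rw [← Finset.mul_sum, ← Finset.mul_sum, hpars]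
    field_simp

lemma scalar_step {κ : Type*} [Fintype κ] (c : κ → ℝ) (νs : κ → ℝ) (hc : ∀ i, 0 ≤ c i)
    (hν : ∀ i, 0 ≤ νs i) (hC : ∑ i, c i ≤ 1) {r : ℝ} (hr : 1 ≤ r) :
    (∑ i, c i * νs i) ^ r ≤ ∑ i, c i * νs i ^ r := by
  have hr0 : r ≠ 0 := by intro h; rw [h] at hr; norm_num at hr
  have key := Real.rpow_arith_mean_le_arith_mean_rpow (Finset.univ : Finset (Option κ))
    (fun o => o.elim (1 - ∑ i, c i) c) (fun o => o.elim 0 νs)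
    (fun o _ => by cases o <;> simp [hc, sub_nonneg.mpr hC])
    (by rw [Fintype.sum_option]; simp)
    (fun o _ => by cases o <;> simp [hν]) hr
  rw [Fintype.sum_option, Fintype.sum_option] at key
  simp only [Option.elim, mul_zero, zero_add] at key
  rw [Real.zero_rpow hr0, mul_zero, zero_add] at key
  exact key

lemma core {r : ℝ} (hr : 1 ≤ r) :
    ∑ q : Fin N × Fin d, μ a q.1 q.2 ^ r ≤ ∑ i, ν a i ^ r := by
  have h1 : ∀ q : Fin N × Fin d, μ a q.1 q.2 ^ r ≤ ∑ i, cc a q i * ν a i ^ r := by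
    intro q
    rw [factA a q]
    exact scalar_step (cc a q) (ν a) (cc_nonneg a q) (nu_nonneg a) (factC a q) hr
  calc ∑ q : Fin N × Fin d, μ a q.1 q.2 ^ r
      ≤ ∑ q : Fin N × Fin d, ∑ i, cc a q i * ν a i ^ r :=
        Finset.sum_le_sum fun q _ => h1 q
    _ = ∑ i, (∑ q : Fin N × Fin d, cc a q i) * ν a i ^ r := by
        rw [Finset.sum_comm]
        exact Finset.sum_congr rfl fun i _ => (Finset.sum_mul _ _ _).symm
    _ ≤ ∑ i, ν a i ^ r := Finset.sum_le_sum fun i _ =>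
        mul_le_of_le_one_left (Real.rpow_nonneg (nu_nonneg a i) r) (factB a i)

lemma eig_congr {n : ℕ} {M M' : Matrix (Fin n) (Fin n) ℂ} (h : M = M')
    (hM : M.IsHermitian) (hM' : M'.IsHermitian) : hM.eigenvalues = hM'.eigenvalues := by
  subst h
  rfl

lemma sqrt_eig : ((Matrix.posSemidef_conjTranspose_mul_self ((psdSum a).sqrt)).1).eigenvalues
    = (psdSum a).1.eigenvalues := by
  apply eig_congr
  conv_rhs => rw [(psdSum a).1.spectral_theorem, Unitary.conjStarAlgAut_apply]
  have hU : ((psdSum a).1.eigenvectorUnitary : Matrix (Fin d) (Fin d) ℂ)ᴴ *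
      ((psdSum a).1.eigenvectorUnitary : Matrix (Fin d) (Fin d) ℂ) = 1 := by
    rw [← star_eq_conjTranspose]; exact Unitary.coe_star_mul_self _
  unfold Matrix.PosSemidef.sqrt
  simp only [Unitary.coe_star, star_eq_conjTranspose, conjTranspose_mul,
    conjTranspose_conjTranspose, diagonal_conjTranspose, Matrix.mul_assoc]
  rw [← Matrix.mul_assoc _ ((psdSum a).1.eigenvectorUnitary : Matrix (Fin d) (Fin d) ℂ), hU,
    Matrix.one_mul, ← Matrix.mul_assoc (diagonal _) (diagonal _), diagonal_mul_diagonal]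
  congr 3
  funext i
  simp only [Pi.star_apply, Function.comp_apply, RCLike.star_def, RCLike.conj_ofReal]
  rw [← RCLike.ofReal_mul, Real.mul_self_sqrt ((psdSum a).eigenvalues_nonneg i)]

end StmtAux



open StmtAux

/-- For `2 ≤ p ≤ ∞`, `(Σ_k ‖a_k‖_p^p)^{1/p} ≤ ‖(Σ_k a_k* a_k)^{1/2}‖_p`
(with the supremum convention for `p = ∞`). -/
theorem stmt4 {d N : ℕ} (p : ℝ≥0∞) (hp : 2 ≤ p) (a : Fin N → Matrix (Fin d) (Fin d) ℂ) :
    (if p = ⊤ then ⨆ k, schatten ⊤ (a k)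
      else (∑ k, schatten p (a k) ^ p.toReal) ^ (1 / p.toReal))
    ≤ schatten p (psdSum a).sqrt := by
  by_cases hptop : p = ⊤
  · subst hptop
    rw [if_pos rfl]
    have hsch : schatten ⊤ (psdSum a).sqrt = ⨆ i, Real.sqrt (ν a i) := by
      unfold schatten
      rw [if_pos rfl, sqrt_eig a]
      rfl
    rw [hsch]
    have hub : ∀ (k : Fin N) (j : Fin d), Real.sqrt (μ a k j) ≤ ⨆ i, Real.sqrt (ν a i) := by
      intro k j
      obtain ⟨i0, -, hmax⟩ :=
        Finset.exists_max_image Finset.univ (ν a) ⟨j, Finset.mem_univ j⟩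
      have hle : μ a k j ≤ ν a i0 := by
        rw [factA a (k, j)]
        calc ∑ i, cc a (k, j) i * ν a i
            ≤ ∑ i, cc a (k, j) i * ν a i0 := Finset.sum_le_sum fun i _ =>
              mul_le_mul_of_nonneg_left (hmax i (Finset.mem_univ i)) (cc_nonneg a _ i)
          _ = (∑ i, cc a (k, j) i) * ν a i0 := (Finset.sum_mul _ _ _).symm
          _ ≤ 1 * ν a i0 :=
              mul_le_mul_of_nonneg_right (factC a (k, j)) (nu_nonneg a i0)
          _ = ν a i0 := one_mul _
      calc Real.sqrt (μ a k j) ≤ Real.sqrt (ν a i0) := Real.sqrt_le_sqrt hle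
        _ ≤ ⨆ i, Real.sqrt (ν a i) :=
            le_ciSup (f := fun i => Real.sqrt (ν a i)) (Finite.bddAbove_range _) i0
    have hrhs0 : 0 ≤ ⨆ i, Real.sqrt (ν a i) := by
      rcases isEmpty_or_nonempty (Fin d) with hd | hd
      · rw [Real.iSup_of_isEmpty]
      · exact le_trans (Real.sqrt_nonneg _)
          (le_ciSup (f := fun i => Real.sqrt (ν a i)) (Finite.bddAbove_range _)
            (Classical.arbitrary (Fin d)))
    refine Real.iSup_le (fun k => ?_) hrhs0
    have hk : schatten ⊤ (a k) = ⨆ j, Real.sqrt (μ a k j) := by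
      unfold schatten
      rw [if_pos rfl]
      rfl
    rw [hk]
    exact Real.iSup_le (fun j => hub k j) hrhs0
  · rw [if_neg hptop]
    have ht2 : (2 : ℝ) ≤ p.toReal := by
      have h := (ENNReal.toReal_le_toReal (by norm_num) hptop).mpr hp
      simpa using h
    have ht0 : p.toReal ≠ 0 := by
      intro h
      rw [h] at ht2
      norm_num at ht2
    have hr : 1 ≤ p.toReal / 2 := by linarith
    have hsch : ∀ k, schatten p (a k) ^ p.toReal = ∑ j, μ a k j ^ (p.toReal / 2) := by
      intro k
      unfold schatten
      rw [if_neg hptop]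
      show ((∑ j, μ a k j ^ (p.toReal / 2)) ^ (1 / p.toReal)) ^ p.toReal
        = ∑ j, μ a k j ^ (p.toReal / 2)
      rw [one_div, Real.rpow_inv_rpow (Finset.sum_nonneg fun j _ =>
        Real.rpow_nonneg (mu_nonneg a k j) _) ht0]
    have hsch2 : schatten p (psdSum a).sqrt
        = (∑ i, ν a i ^ (p.toReal / 2)) ^ (1 / p.toReal) := by
      unfold schatten
      rw [if_neg hptop, sqrt_eig a]
      rfl
    rw [hsch2, Finset.sum_congr rfl fun k _ => hsch k]
    apply Real.rpow_le_rpow (Finset.sum_nonneg fun k _ => Finset.sum_nonneg fun j _ =>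
      Real.rpow_nonneg (mu_nonneg a k j) _) ?_ (by positivity)
    calc ∑ k, ∑ j, μ a k j ^ (p.toReal / 2)
        = ∑ q : Fin N × Fin d, μ a q.1 q.2 ^ (p.toReal / 2) :=
          (Fintype.sum_prod_type (fun q : Fin N × Fin d => μ a q.1 q.2 ^ (p.toReal / 2))).symm
      _ ≤ ∑ i, ν a i ^ (p.toReal / 2) := core a hr
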